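/- Assuming FS0–FS2, the non-existence clause of FS1 can be strengthened: for every Op¹ event a, there is no event b with Rem(b), χ(b)≠f, γ(a) <₀ b <₀ a, and kval(b)=kval(a). -/

import Mathlib

/-- Status of an event: 0, 1, or f (failed). -/
inductive Status | s0 | s1 | sf
deriving DecidableEq

open Status

/-!
Fix an `Op¹` event `a` and call the interval `(γ a, a)` its window. An `Op⁰` event of key `kval a`
inside the window is impossible: by FS2 it would be preceded, after `γ a`, by a successful remove
pointing at `γ a`, which FS1 forbids. Consequently every `Op¹` event `b` of the same key inside the
window has `γ b = γ a`, since otherwise one of `γ a`, `γ b` would be an `Op⁰` event inside the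
window of the other. For a remove `b` that is exactly what FS1 excludes.
-/

section Window

variable {Add Rem : ℕ → Prop} {kval : ℕ → ℕ} {χ : ℕ → Status} {γ : ℕ → ℕ}

theorem status_ne_s0_of_mem_window
    (FS1 : ∀ a, χ a = s1 →
      γ a < a ∧ Add (γ a) ∧ χ (γ a) = s0 ∧ kval (γ a) = kval a ∧
      ¬ ∃ r, Rem r ∧ χ r = s1 ∧ γ r = γ a ∧ γ a < r ∧ r < a)
    (FS2 : ∀ a b, a < b → Add a → χ a = s0 → χ b = s0 → kval a = kval b →
      ∃ r, a < r ∧ r < b ∧ Rem r ∧ χ r = s1 ∧ γ r = a)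
    {a b : ℕ} (ha : χ a = s1) (hab : γ a < b) (hba : b < a) (hk : kval b = kval a) :
    χ b ≠ s0 := by
  intro hb
  obtain ⟨-, hAdd, hγa, hkγ, hno⟩ := FS1 a ha
  obtain ⟨r, hγr, hrb, hRem, hr, hrγ⟩ := FS2 (γ a) b hab hAdd hγa hb (hkγ.trans hk.symm)
  exact hno ⟨r, hRem, hr, hrγ, hγr, hrb.trans hba⟩

theorem gamma_eq_of_mem_window
    (FS1 : ∀ a, χ a = s1 →
      γ a < a ∧ Add (γ a) ∧ χ (γ a) = s0 ∧ kval (γ a) = kval a ∧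
      ¬ ∃ r, Rem r ∧ χ r = s1 ∧ γ r = γ a ∧ γ a < r ∧ r < a)
    (FS2 : ∀ a b, a < b → Add a → χ a = s0 → χ b = s0 → kval a = kval b →
      ∃ r, a < r ∧ r < b ∧ Rem r ∧ χ r = s1 ∧ γ r = a)
    {a b : ℕ} (ha : χ a = s1) (hb : χ b = s1) (hab : γ a < b) (hba : b < a)
    (hk : kval b = kval a) :
    γ b = γ a := by
  obtain ⟨-, -, hγa, hkγa, -⟩ := FS1 a ha
  obtain ⟨hγb, -, hγb0, hkγb, -⟩ := FS1 b hb
  rcases lt_trichotomy (γ b) (γ a) with hlt | heq | hgt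
  · exact absurd hγa
      (status_ne_s0_of_mem_window FS1 FS2 hb hlt hab (hkγa.trans hk.symm))
  · exact heq
  · exact absurd hγb0
      (status_ne_s0_of_mem_window FS1 FS2 ha hgt (hγb.trans hba) (hkγb.trans hk))

end Window

theorem stmt1_general
    (Add Rem : ℕ → Prop) (kval : ℕ → ℕ) (χ : ℕ → Status) (γ : ℕ → ℕ)
    (FS1 : ∀ a, χ a = s1 →
      γ a < a ∧ Add (γ a) ∧ χ (γ a) = s0 ∧ kval (γ a) = kval a ∧
      ¬ ∃ r, Rem r ∧ χ r = s1 ∧ γ r = γ a ∧ γ a < r ∧ r < a)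
    (FS2 : ∀ a b, a < b → Add a → χ a = s0 → χ b = s0 → kval a = kval b →
      ∃ r, a < r ∧ r < b ∧ Rem r ∧ χ r = s1 ∧ γ r = a) :
    ∀ a, χ a = s1 →
      ¬ ∃ b, Rem b ∧ χ b ≠ sf ∧ γ a < b ∧ b < a ∧ kval b = kval a := by
  rintro a ha ⟨b, hRem, hbf, hab, hba, hk⟩
  cases hb : χ b with
  | sf => exact hbf hb
  | s0 => exact status_ne_s0_of_mem_window FS1 FS2 ha hab hba hk hb
  | s1 =>
    have hγ : γ b = γ a := gamma_eq_of_mem_window FS1 FS2 ha hb hab hba hk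
    exact (FS1 a ha).2.2.2.2 ⟨b, hRem, hb, hγ, hab, hba⟩

/-- Assuming FS0–FS2, the non-existence clause of FS1 can be
strengthened: for every Op¹ event a, there is no event b with Rem(b), χ(b)≠f,
γ(a) <₀ b <₀ a, and kval(b)=kval(a). -/
theorem stmt1
    (Add Rem Cnt : ℕ → Prop) (kval : ℕ → ℕ) (χ : ℕ → Status) (γ : ℕ → ℕ)
    (FS0 : ∀ e, ¬ (Add e ∧ Rem e) ∧ ¬ (Add e ∧ Cnt e) ∧ ¬ (Rem e ∧ Cnt e))
    (FS1 : ∀ a, χ a = s1 →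
      γ a < a ∧ Add (γ a) ∧ χ (γ a) = s0 ∧ kval (γ a) = kval a ∧
      ¬ ∃ r, Rem r ∧ χ r = s1 ∧ γ r = γ a ∧ γ a < r ∧ r < a)
    (FS2 : ∀ a b, a < b → Add a → χ a = s0 → χ b = s0 → kval a = kval b →
      ∃ r, a < r ∧ r < b ∧ Rem r ∧ χ r = s1 ∧ γ r = a) :
    ∀ a, χ a = s1 →
      ¬ ∃ b, Rem b ∧ χ b ≠ sf ∧ γ a < b ∧ b < a ∧ kval b = kval a :=
  stmt1_general Add Rem kval χ γ FS1 FS2
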